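/- arXiv:1804.08585 — 3 statements merged into one kernel-verified Lean document; each statement's English description precedes it below -/
import Mathlib

section
/- Let E be an exact category with enough projectives. Then every internally projective object of E is projective if and only if the terminal object of E is projective. -/
open CategoryTheory Limits

namespace ExComp

universe v u

variable {E : Type u} [Category.{v} E]

/-- A regular epimorphism, as a property of a morphism. -/
def RegEpi {A B : E} (f : A ⟶ B) : Prop := Nonempty (RegularEpi f)

/-- An object is (regular) projective if its covariant hom functor sends regular
epimorphisms to surjections. -/
def RegProjective (X : E) : Prop :=
  ∀ ⦃A B : E⦄ (e : A ⟶ B), RegEpi e → ∀ f : X ⟶ B, ∃ g : X ⟶ A, g ≫ e = f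

/-- `E` has enough projectives: every object admits a regular epimorphism from a
projective object. -/
def EnoughRegProjectives (E : Type u) [Category.{v} E] : Prop :=
  ∀ A : E, ∃ (X : E) (p : X ⟶ A), RegProjective X ∧ RegEpi p

/-- An internal equivalence relation: a jointly monic, reflexive, symmetric and
transitive pair of parallel arrows. -/
structure IsEquivRelPair {R X : E} (r₁ r₂ : R ⟶ X) : Prop where
  jointlyMono : ∀ ⦃T : E⦄ (h k : T ⟶ R), h ≫ r₁ = k ≫ r₁ → h ≫ r₂ = k ≫ r₂ → h = k
  refl : ∃ d : X ⟶ R, d ≫ r₁ = 𝟙 X ∧ d ≫ r₂ = 𝟙 X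
  symm : ∃ s : R ⟶ R, s ≫ r₁ = r₂ ∧ s ≫ r₂ = r₁
  trans : ∀ ⦃T : E⦄ (p q : T ⟶ R), p ≫ r₂ = q ≫ r₁ →
    ∃ t : T ⟶ R, t ≫ r₁ = p ≫ r₁ ∧ t ≫ r₂ = q ≫ r₂

/-- An exact category: a finitely complete category where every morphism factors as a
regular epi followed by a mono, regular epis are stable under pullback, and every
internal equivalence relation is effective (it is the kernel pair of the coequaliser
it admits). -/
structure IsExact (E : Type u) [Category.{v} E] [HasFiniteLimits E] : Prop where
  factor : ∀ ⦃A B : E⦄ (f : A ⟶ B), ∃ (I : E) (e : A ⟶ I) (m : I ⟶ B),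
    RegEpi e ∧ Mono m ∧ e ≫ m = f
  stable : ∀ ⦃A B C : E⦄ (f : A ⟶ B) (g : C ⟶ B), RegEpi f → RegEpi (pullback.snd f g)
  effective : ∀ ⦃R X : E⦄ (r₁ r₂ : R ⟶ X), IsEquivRelPair r₁ r₂ →
    ∃ (Q : E) (q : X ⟶ Q) (w : r₁ ≫ q = r₂ ≫ q),
      Nonempty (IsColimit (Cofork.ofπ q w)) ∧ IsPullback r₁ r₂ q q

/-- A projective cover of `E`: a (full sub)collection of objects, each projective,
such that every object of `E` admits a regular epimorphism from one of them. -/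
def IsProjectiveCover (P : Set E) : Prop :=
  (∀ X ∈ P, RegProjective X) ∧ ∀ A : E, ∃ X ∈ P, ∃ p : X ⟶ A, RegEpi p

section FinLim
variable [HasFiniteLimits E]

/-- `X` is internally projective: every arrow `T ⨯ X ⟶ B` lifts along a regular epi
`A ↠ B` after passing to a regular epi `U ↠ T`. -/
def InternallyProjective (X : E) : Prop :=
  ∀ ⦃T A B : E⦄ (e : A ⟶ B), RegEpi e → ∀ f : T ⨯ X ⟶ B,
    ∃ (U : E) (u : U ⟶ T) (g : U ⨯ X ⟶ A), RegEpi u ∧ g ≫ e = prod.map u (𝟙 X) ≫ f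

/-- Cartesian closure, as a property: for every object `X` the functor `(−) ⨯ X` has a
right adjoint. -/
def CartesianClosedP (E : Type u) [Category.{v} E] [HasFiniteLimits E] : Prop :=
  ∀ X : E, (prod.functor.flip.obj X).IsLeftAdjoint

/-- Local cartesian closure, as a property: every slice is cartesian closed. -/
def LocallyCartesianClosedP (E : Type u) [Category.{v} E] [HasFiniteLimits E] : Prop :=
  ∀ (I : E) (F : Over I), ((prod.functor (C := Over I)).flip.obj F).IsLeftAdjoint

end FinLim

/-! ## Weak products and weak simple products -/

/-- A weak product in `P` of `X` and `Y`: a span through which every span in `P`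
factors (not necessarily uniquely). -/
structure IsWeakProduct (P : Set E) {X Y V : E} (p : V ⟶ X) (q : V ⟶ Y) : Prop where
  mem : V ∈ P
  lift : ∀ ⦃V' : E⦄, V' ∈ P → ∀ (p' : V' ⟶ X) (q' : V' ⟶ Y),
    ∃ h : V' ⟶ V, h ≫ p = p' ∧ h ≫ q = q'

/-- An arrow out of a weak product is determined by projections if it coequalises
every pair of arrows (from an object of `P`) coequalised by both projections. -/
def DeterminedByProjections (P : Set E) {V X Y Z : E} (p : V ⟶ X) (q : V ⟶ Y)
    (f : V ⟶ Z) : Prop :=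
  ∀ ⦃V' : E⦄, V' ∈ P → ∀ (h k : V' ⟶ V), h ≫ p = k ≫ p → h ≫ q = k ≫ q → h ≫ f = k ≫ f

/-- A candidate diagram for a weak simple product of a span `J ←f Y →g X`. -/
structure WSPCone (P : Set E) {J Y X : E} (f : Y ⟶ J) (g : Y ⟶ X)
    (W V : E) (w : W ⟶ J) (p : V ⟶ W) (q : V ⟶ X) (e : V ⟶ Y) : Prop where
  memW : W ∈ P
  wp : IsWeakProduct P p q
  det : DeterminedByProjections P p q e
  comm₁ : p ≫ w = e ≫ f
  comm₂ : q = e ≫ g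

/-- A weak simple product: a weakly terminal candidate diagram. -/
structure IsWeakSimpleProduct (P : Set E) {J Y X : E} (f : Y ⟶ J) (g : Y ⟶ X)
    (W V : E) (w : W ⟶ J) (p : V ⟶ W) (q : V ⟶ X) (e : V ⟶ Y) : Prop where
  cone : WSPCone P f g W V w p q e
  lift : ∀ ⦃W' V' : E⦄ (w' : W' ⟶ J) (p' : V' ⟶ W') (q' : V' ⟶ X) (e' : V' ⟶ Y),
    WSPCone P f g W' V' w' p' q' e' →
    ∃ (α : W' ⟶ W) (β : V' ⟶ V),
      α ≫ w = w' ∧ β ≫ p = p' ≫ α ∧ β ≫ q = q' ∧ β ≫ e = e'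

/-- `P` has weak simple products. -/
def HasWeakSimpleProducts (P : Set E) : Prop :=
  ∀ ⦃J Y X : E⦄, J ∈ P → Y ∈ P → X ∈ P → ∀ (f : Y ⟶ J) (g : Y ⟶ X),
    ∃ (W V : E) (w : W ⟶ J) (p : V ⟶ W) (q : V ⟶ X) (e : V ⟶ Y),
      IsWeakSimpleProduct P f g W V w p q e

/-! ## Pseudo simple products -/

/-- A candidate diagram for a pseudo simple product (no determinacy requirement). -/
structure PSPCone (P : Set E) {J Y X : E} (f : Y ⟶ J) (g : Y ⟶ X)
    (W V : E) (w : W ⟶ J) (p : V ⟶ W) (q : V ⟶ X) (e : V ⟶ Y) : Prop where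
  memW : W ∈ P
  wp : IsWeakProduct P p q
  comm₁ : p ≫ w = e ≫ f
  comm₂ : q = e ≫ g

/-- A pseudo simple product: a weakly terminal candidate diagram. -/
structure IsPseudoSimpleProduct (P : Set E) {J Y X : E} (f : Y ⟶ J) (g : Y ⟶ X)
    (W V : E) (w : W ⟶ J) (p : V ⟶ W) (q : V ⟶ X) (e : V ⟶ Y) : Prop where
  cone : PSPCone P f g W V w p q e
  lift : ∀ ⦃W' V' : E⦄ (w' : W' ⟶ J) (p' : V' ⟶ W') (q' : V' ⟶ X) (e' : V' ⟶ Y),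
    PSPCone P f g W' V' w' p' q' e' →
    ∃ (α : W' ⟶ W) (β : V' ⟶ V),
      α ≫ w = w' ∧ β ≫ p = p' ≫ α ∧ β ≫ q = q' ∧ β ≫ e = e'

/-- `P` has pseudo simple products. -/
def HasPseudoSimpleProducts (P : Set E) : Prop :=
  ∀ ⦃J Y X : E⦄, J ∈ P → Y ∈ P → X ∈ P → ∀ (f : Y ⟶ J) (g : Y ⟶ X),
    ∃ (W V : E) (w : W ⟶ J) (p : V ⟶ W) (q : V ⟶ X) (e : V ⟶ Y),
      IsPseudoSimpleProduct P f g W V w p q e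

/-! ## Weak exponentials -/

/-- A candidate diagram for a weak exponential of `X` and `Y`. -/
structure WExpCone (P : Set E) {X Y : E} (W V : E) (p : V ⟶ W) (q : V ⟶ X)
    (e : V ⟶ Y) : Prop where
  memW : W ∈ P
  wp : IsWeakProduct P p q
  det : DeterminedByProjections P p q e

/-- A weak exponential of `X` and `Y` in `P`. -/
structure IsWeakExponential (P : Set E) {X Y : E} (W V : E) (p : V ⟶ W) (q : V ⟶ X)
    (e : V ⟶ Y) : Prop where
  cone : WExpCone P W V p q e
  lift : ∀ ⦃W' V' : E⦄ (p' : V' ⟶ W') (q' : V' ⟶ X) (e' : V' ⟶ Y),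
    WExpCone P W' V' p' q' e' →
    ∃ (α : W' ⟶ W) (β : V' ⟶ V), β ≫ p = p' ≫ α ∧ β ≫ q = q' ∧ β ≫ e = e'

/-- `P` has weak exponentials. -/
def HasWeakExponentials (P : Set E) : Prop :=
  ∀ ⦃X Y : E⦄, X ∈ P → Y ∈ P →
    ∃ (W V : E) (p : V ⟶ W) (q : V ⟶ X) (e : V ⟶ Y), IsWeakExponential P W V p q e

/-- A quasi exponential of `X` and `B`: the weak universal property of an exponential
restricted to projective sources. -/
def IsQuasiExponential [HasFiniteLimits E] (P : Set E) (X : E) {B : E} (W : E)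
    (e : W ⨯ X ⟶ B) : Prop :=
  ∀ ⦃Z : E⦄, Z ∈ P → ∀ f : Z ⨯ X ⟶ B, ∃ g : Z ⟶ W, prod.map g (𝟙 X) ≫ e = f

section FinLim2
variable [HasFiniteLimits E]

/-! ## Pseudo equivalence relations, equalities and generalised weak (simple) products -/

/-- A pseudo equivalence relation: a pair of parallel arrows whose image in `E` is an
equivalence relation. -/
def IsPseudoEquivRel {Y1 Y0 : E} (y₁ y₂ : Y1 ⟶ Y0) : Prop :=
  ∃ (R : E) (e : Y1 ⟶ R) (m : R ⟶ Y0 ⨯ Y0), RegEpi e ∧ Mono m ∧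
    e ≫ m = prod.lift y₁ y₂ ∧ IsEquivRelPair (m ≫ prod.fst) (m ≫ prod.snd)

/-- An equality for a weak limit, relative to the comparison arrow `c : V0 ⟶ L` into
the actual limit: a pseudo equivalence relation `v₁, v₂ : V1 ⇉ V0` in `P` such that
`c` is a coequaliser of `v₁, v₂` and `V1` regularly covers the kernel pair of `c`. -/
structure IsEqualityFor (P : Set E) {V1 V0 L : E} (c : V0 ⟶ L) (v₁ v₂ : V1 ⟶ V0) :
    Prop where
  mem : V1 ∈ P
  per : IsPseudoEquivRel v₁ v₂
  w : v₁ ≫ c = v₂ ≫ c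
  coeq : Nonempty (IsColimit (Cofork.ofπ c w))
  cover : RegEpi (pullback.lift v₁ v₂ w)

/-- An arrow `e : V ⟶ Z0` out of a weak product with projections `p, q` preserves
projections with respect to a pseudo equivalence relation `z₁, z₂ : Z1 ⇉ Z0` if for
any equality `v₁, v₂ : V1 ⇉ V` for the weak product there is `t : V1 ⟶ Z1` with
`t ≫ zᵢ = vᵢ ≫ e`. -/
def PreservesProjWP (P : Set E) {V X Y Z1 Z0 : E} (p : V ⟶ X) (q : V ⟶ Y)
    (z₁ z₂ : Z1 ⟶ Z0) (e : V ⟶ Z0) : Prop :=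
  ∀ ⦃V1 : E⦄ (v₁ v₂ : V1 ⟶ V), IsEqualityFor P (prod.lift p q) v₁ v₂ →
    ∃ t : V1 ⟶ Z1, t ≫ z₁ = v₁ ≫ e ∧ t ≫ z₂ = v₂ ≫ e

/-- A candidate diagram for a generalised weak simple product of `f` and `g` with
respect to the pseudo equivalence relation `y₁, y₂`. -/
structure GWSPCone (P : Set E) {Y1 Y0 J X : E} (y₁ y₂ : Y1 ⟶ Y0) (f : Y0 ⟶ J)
    (g : Y0 ⟶ X) (W V : E) (w : W ⟶ J) (p : V ⟶ W) (q : V ⟶ X) (e : V ⟶ Y0) :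
    Prop where
  memW : W ∈ P
  wp : IsWeakProduct P p q
  pres : PreservesProjWP P p q y₁ y₂ e
  comm₁ : p ≫ w = e ≫ f
  comm₂ : q = e ≫ g

/-- A generalised weak simple product: a weakly terminal candidate diagram. -/
structure IsGWSP (P : Set E) {Y1 Y0 J X : E} (y₁ y₂ : Y1 ⟶ Y0) (f : Y0 ⟶ J)
    (g : Y0 ⟶ X) (W V : E) (w : W ⟶ J) (p : V ⟶ W) (q : V ⟶ X) (e : V ⟶ Y0) :
    Prop where
  cone : GWSPCone P y₁ y₂ f g W V w p q e
  lift : ∀ ⦃W' V' : E⦄ (w' : W' ⟶ J) (p' : V' ⟶ W') (q' : V' ⟶ X) (e' : V' ⟶ Y0),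
    GWSPCone P y₁ y₂ f g W' V' w' p' q' e' →
    ∃ (α : W' ⟶ W) (β : V' ⟶ V),
      α ≫ w = w' ∧ β ≫ p = p' ≫ α ∧ β ≫ q = q' ∧ β ≫ e = e'

/-- `P` has generalised weak simple products. -/
def HasGWSP (P : Set E) : Prop :=
  ∀ ⦃Y1 Y0 J X : E⦄, Y1 ∈ P → Y0 ∈ P → J ∈ P → X ∈ P →
    ∀ (y₁ y₂ : Y1 ⟶ Y0), IsPseudoEquivRel y₁ y₂ →
    ∀ (f : Y0 ⟶ J) (g : Y0 ⟶ X), y₁ ≫ f = y₂ ≫ f → y₁ ≫ g = y₂ ≫ g →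
    ∃ (W V : E) (w : W ⟶ J) (p : V ⟶ W) (q : V ⟶ X) (e : V ⟶ Y0),
      IsGWSP P y₁ y₂ f g W V w p q e

/-- A candidate diagram for a generalised weak exponential of `X` and `y₁, y₂`. -/
structure GWExpCone (P : Set E) {X Y1 Y0 : E} (y₁ y₂ : Y1 ⟶ Y0)
    (W V : E) (p : V ⟶ W) (q : V ⟶ X) (e : V ⟶ Y0) : Prop where
  memW : W ∈ P
  wp : IsWeakProduct P p q
  pres : PreservesProjWP P p q y₁ y₂ e

/-- A generalised weak exponential of `X` and a pseudo equivalence relation. -/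
structure IsGWExp (P : Set E) {X Y1 Y0 : E} (y₁ y₂ : Y1 ⟶ Y0)
    (W V : E) (p : V ⟶ W) (q : V ⟶ X) (e : V ⟶ Y0) : Prop where
  cone : GWExpCone P y₁ y₂ W V p q e
  lift : ∀ ⦃W' V' : E⦄ (p' : V' ⟶ W') (q' : V' ⟶ X) (e' : V' ⟶ Y0),
    GWExpCone P y₁ y₂ W' V' p' q' e' →
    ∃ (α : W' ⟶ W) (β : V' ⟶ V), β ≫ p = p' ≫ α ∧ β ≫ q = q' ∧ β ≫ e = e'

/-! ## Weak pullbacks and generalised weak dependent products -/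

/-- A weak pullback in `P` of the cospan `X →f J ←w W`. -/
structure IsWeakPullback (P : Set E) {X J W V : E} (f : X ⟶ J) (w : W ⟶ J)
    (a : V ⟶ X) (b : V ⟶ W) : Prop where
  mem : V ∈ P
  comm : a ≫ f = b ≫ w
  lift : ∀ ⦃V' : E⦄, V' ∈ P → ∀ (a' : V' ⟶ X) (b' : V' ⟶ W), a' ≫ f = b' ≫ w →
    ∃ h : V' ⟶ V, h ≫ a = a' ∧ h ≫ b = b'

/-- Preservation of projections for an arrow out of a weak pullback. -/
def PreservesProjWPB (P : Set E) {V X J W Z1 Z0 : E} (f : X ⟶ J) (w : W ⟶ J)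
    (a : V ⟶ X) (b : V ⟶ W) (h : a ≫ f = b ≫ w) (z₁ z₂ : Z1 ⟶ Z0) (e : V ⟶ Z0) :
    Prop :=
  ∀ ⦃V1 : E⦄ (v₁ v₂ : V1 ⟶ V), IsEqualityFor P (pullback.lift a b h) v₁ v₂ →
    ∃ t : V1 ⟶ Z1, t ≫ z₁ = v₁ ≫ e ∧ t ≫ z₂ = v₂ ≫ e

/-- A candidate diagram for a generalised weak dependent product of `g : Y0 ⟶ X`
along `f : X ⟶ J` with respect to `y₁, y₂`. -/
structure GWDPCone (P : Set E) {Y1 Y0 X J : E} (y₁ y₂ : Y1 ⟶ Y0) (g : Y0 ⟶ X)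
    (f : X ⟶ J) (W V : E) (w : W ⟶ J) (a : V ⟶ X) (b : V ⟶ W) (e : V ⟶ Y0) :
    Prop where
  memW : W ∈ P
  comm : a ≫ f = b ≫ w
  wpb : IsWeakPullback P f w a b
  overX : e ≫ g = a
  pres : PreservesProjWPB P f w a b comm y₁ y₂ e

/-- A generalised weak dependent product: a weakly terminal candidate diagram. -/
structure IsGWDP (P : Set E) {Y1 Y0 X J : E} (y₁ y₂ : Y1 ⟶ Y0) (g : Y0 ⟶ X)
    (f : X ⟶ J) (W V : E) (w : W ⟶ J) (a : V ⟶ X) (b : V ⟶ W) (e : V ⟶ Y0) :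
    Prop where
  cone : GWDPCone P y₁ y₂ g f W V w a b e
  lift : ∀ ⦃W' V' : E⦄ (w' : W' ⟶ J) (a' : V' ⟶ X) (b' : V' ⟶ W') (e' : V' ⟶ Y0),
    GWDPCone P y₁ y₂ g f W' V' w' a' b' e' →
    ∃ (α : W' ⟶ W) (β : V' ⟶ V),
      α ≫ w = w' ∧ β ≫ a = a' ∧ β ≫ b = b' ≫ α ∧ β ≫ e = e'

/-- `P` has generalised weak dependent products (i.e. `P` is weakly locally cartesian
closed). -/
def HasGWDP (P : Set E) : Prop :=
  ∀ ⦃Y1 Y0 X J : E⦄, Y1 ∈ P → Y0 ∈ P → X ∈ P → J ∈ P →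
    ∀ (y₁ y₂ : Y1 ⟶ Y0), IsPseudoEquivRel y₁ y₂ →
    ∀ (g : Y0 ⟶ X) (f : X ⟶ J), y₁ ≫ g = y₂ ≫ g →
    ∃ (W V : E) (w : W ⟶ J) (a : V ⟶ X) (b : V ⟶ W) (e : V ⟶ Y0),
      IsGWDP P y₁ y₂ g f W V w a b e

/-! ## The functor `w_X` on subobjects induced by weak simple products -/

/-- The adjunction property of the weak-simple-product operation `w_X` on subobjects:
for every subobject `a : A ↪ J ⨯ X`, every `P`-cover `Y ↠ A`, every weak simple
product `W → J` of the induced span and every image factorisation `W ↠ I ↪ J` of it,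
the subobject `I ↪ J` is a value at `a` of a right adjoint to
`(−) ⨯ X : Sub(J) → Sub(J ⨯ X)`. -/
def WAdj (P : Set E) (J X : E) : Prop :=
  ∀ ⦃A : E⦄ (a : A ⟶ J ⨯ X), Mono a →
  ∀ ⦃Y : E⦄, Y ∈ P → ∀ (c : Y ⟶ A), RegEpi c →
  ∀ ⦃W V : E⦄ (w : W ⟶ J) (p : V ⟶ W) (q : V ⟶ X) (e : V ⟶ Y),
    IsWeakSimpleProduct P (c ≫ a ≫ prod.fst) (c ≫ a ≫ prod.snd) W V w p q e →
  ∀ ⦃I : E⦄ (ew : W ⟶ I) (m : I ⟶ J), RegEpi ew → Mono m → ew ≫ m = w →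
  ∀ ⦃B : E⦄ (b : B ⟶ J), Mono b →
    ((∃ t : B ⨯ X ⟶ A, t ≫ a = prod.map b (𝟙 X)) ↔ ∃ s : B ⟶ I, s ≫ m = b)

/-! ## Weak dependent products (à la Carboni–Rosolini) -/

/-- `P` has weak dependent products: for `f : X ⟶ J` and `g : Y ⟶ X` in `P` there are
`w : W ⟶ J` in `P` and a surjection `Hom_{P/J}(h, w) → Hom_{P/X}(f*(h), g)` natural
in `h ∈ P/J`. -/
def HasWeakDependentProducts (P : Set E) : Prop :=
  ∀ ⦃X J Y : E⦄, X ∈ P → J ∈ P → Y ∈ P → ∀ (f : X ⟶ J) (g : Y ⟶ X),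
    ∃ (W : E) (_ : W ∈ P) (w : W ⟶ J)
      (ε : ∀ ⦃T : E⦄, T ∈ P → ∀ (h : T ⟶ J) (k : T ⟶ W), k ≫ w = h →
        (pullback h f ⟶ Y)),
      (∀ ⦃T : E⦄ (hT : T ∈ P) (h : T ⟶ J) (k : T ⟶ W) (hk : k ≫ w = h),
         ε hT h k hk ≫ g = pullback.snd h f) ∧
      (∀ ⦃T : E⦄ (hT : T ∈ P) (h : T ⟶ J) (d : pullback h f ⟶ Y),
         d ≫ g = pullback.snd h f → ∃ (k : T ⟶ W) (hk : k ≫ w = h), ε hT h k hk = d) ∧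
      (∀ ⦃T' T : E⦄ (hT' : T' ∈ P) (hT : T ∈ P) (u : T' ⟶ T) (h : T ⟶ J) (k : T ⟶ W)
         (hk : k ≫ w = h),
         ε hT' (u ≫ h) (u ≫ k) (by rw [Category.assoc, hk]) =
           pullback.map (u ≫ h) f h f u (𝟙 X) (𝟙 J) (by simp) (by simp) ≫ ε hT h k hk)

end FinLim2

theorem RegProjective.of_iso {X Y : E} (i : X ≅ Y) (hX : RegProjective X) :
    RegProjective Y := by
  intro A B e he f
  obtain ⟨g, hg⟩ := hX e he (i.hom ≫ f)
  exact ⟨i.inv ≫ g, by rw [Category.assoc, hg, Iso.inv_hom_id_assoc]⟩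

section Projectivity
variable [HasFiniteLimits E]

/-- Internal projectivity of `X` lifts along a regular epi `U ↠ Z`; projectivity of `Z`
splits that regular epi. -/
theorem RegProjective.prod_of_internallyProjective {Z X : E} (hZ : RegProjective Z)
    (hX : InternallyProjective X) : RegProjective (Z ⨯ X) := by
  intro A B e he f
  obtain ⟨U, u, g, hu, hg⟩ := hX e he f
  obtain ⟨s, hs⟩ := hZ u hu (𝟙 Z)
  refine ⟨prod.map s (𝟙 X) ≫ g, ?_⟩
  rw [Category.assoc, hg, prod.map_map_assoc, hs, Category.id_comp, prod.map_id_id,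
    Category.id_comp]

theorem RegProjective.of_internallyProjective {X : E} (hT : RegProjective (⊤_ E))
    (hX : InternallyProjective X) : RegProjective X :=
  (hT.prod_of_internallyProjective hX).of_iso (Limits.prod.leftUnitor X)

/-- Since `T ⨯ ⊤ ≅ T`, the required cover of `T` is the pullback of `e` along `T ⟶ B`. -/
theorem internallyProjective_terminal
    (hstable : ∀ ⦃A B C : E⦄ (f : A ⟶ B) (g : C ⟶ B), RegEpi f → RegEpi (pullback.snd f g)) :
    InternallyProjective (⊤_ E) := by
  intro T A B e he f
  let f' : T ⟶ B := (Limits.prod.rightUnitor T).inv ≫ f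
  refine ⟨pullback e f', pullback.snd e f', (Limits.prod.rightUnitor _).hom ≫ pullback.fst e f',
    hstable e f' he, ?_⟩
  rw [Category.assoc, pullback.condition, ← Limits.prod.rightUnitor_hom_naturality_assoc,
    Iso.hom_inv_id_assoc]

end Projectivity

theorem stmt0_general {E : Type u} [Category.{v} E] [HasFiniteLimits E]
    (hE : IsExact E) :
    (∀ X : E, InternallyProjective X → RegProjective X) ↔ RegProjective (⊤_ E) :=
  ⟨fun h => h _ (internallyProjective_terminal hE.stable),
    fun hT _ hX => hT.of_internallyProjective hX⟩

/-- In an exact category with enough projectives, every internally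
projective object is projective iff the terminal object is projective. -/
theorem stmt0 {E : Type u} [Category.{v} E] [HasFiniteLimits E]
    (hE : IsExact E) (hEP : EnoughRegProjectives E) :
    (∀ X : E, InternallyProjective X → RegProjective X) ↔ RegProjective (⊤_ E) :=
  stmt0_general hE

end ExComp
end

section
/- Let E be an exact category with enough projectives. Then every projective object of E is internally projective if and only if the full subcategory of projective objects of E is closed under binary products, i.e. the product in E of any two projective objects is projective. -/
open CategoryTheory Limits

namespace ExComp

universe v u

variable {E : Type u} [Category.{v} E]

/-! Internal projectivity of `X` asks that `T ⨯ X` be projective only after replacing `T`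
by a regular cover. If `U ↠ T` is a projective cover and `U ⨯ X` is projective, this is
immediate. Conversely, when `T = Y` is itself projective, the cover `U ↠ Y` produced by
internal projectivity splits, and the lift found over `U ⨯ X` restricts along the section
to a lift over `Y ⨯ X`. -/

section
variable [HasFiniteLimits E]

theorem InternallyProjective.regProjective_prod {X Y : E} (hX : InternallyProjective X)
    (hY : RegProjective Y) : RegProjective (Y ⨯ X) := by
  intro A B e he f
  obtain ⟨U, u, g, hu, hg⟩ := hX e he f
  obtain ⟨s, hs⟩ := hY u hu (𝟙 Y)
  refine ⟨prod.map s (𝟙 X) ≫ g, ?_⟩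
  rw [Category.assoc, hg, prod.map_map_assoc, hs, Category.comp_id, prod.map_id_id,
    Category.id_comp]

theorem internallyProjective_of_regProjective_prod (hEP : EnoughRegProjectives E) {X : E}
    (hX : ∀ U : E, RegProjective U → RegProjective (U ⨯ X)) : InternallyProjective X := by
  intro T A B e he f
  obtain ⟨U, u, hU, hu⟩ := hEP T
  obtain ⟨g, hg⟩ := hX U hU e he (prod.map u (𝟙 X) ≫ f)
  exact ⟨U, u, g, hu, hg⟩

end

theorem stmt1_general {E : Type u} [Category.{v} E] [HasFiniteLimits E]
    (hEP : EnoughRegProjectives E) :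
    (∀ X : E, RegProjective X → InternallyProjective X) ↔
      (∀ X Y : E, RegProjective X → RegProjective Y → RegProjective (X ⨯ Y)) := by
  constructor
  · intro h X Y hX hY
    exact (h Y hY).regProjective_prod hX
  · intro h X hX
    exact internallyProjective_of_regProjective_prod hEP fun U hU => h U X hU hX

/-- In an exact category with enough projectives, every projective
object is internally projective iff the projectives are closed under binary
products. -/
theorem stmt1 {E : Type u} [Category.{v} E] [HasFiniteLimits E]
    (hE : IsExact E) (hEP : EnoughRegProjectives E) :
    (∀ X : E, RegProjective X → InternallyProjective X) ↔
      (∀ X Y : E, RegProjective X → RegProjective Y → RegProjective (X ⨯ Y)) :=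
  stmt1_general hEP

end ExComp
end

section
/- Let E be an exact category with enough projectives, P a projective cover of E having weak simple products, and J, X objects of P. Suppose that for every subobject a : A ↪ J × X in E the subobject w_X(a) of J satisfies the adjunction property: for every subobject b of J, b × X ≤ a in Sub(J × X) if and only if b ≤ w_X(a) in Sub(J). Then J × X is a projective object of E. -/
open CategoryTheory Limits

namespace ExComp

universe v u

variable {E : Type u} [Category.{v} E]

/-! Applying the adjunction to the top subobject of `J ⨯ X` shows that `w_X(⊤) = ⊤`: the
weak simple product `w : W ⟶ J` of a `P`-cover `Y ↠ T ↠ J ⨯ X` is a regular epi, hence split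
since `J` is projective. The comparison `V ⟶ W ⨯ X` from the weak product is a regular epi, and
the arrow `V ⟶ Y`, being determined by projections, descends along it; precomposing with the
splitting of `w` yields a section of `T ↠ J ⨯ X`. So every regular epi onto `J ⨯ X` splits. -/

section

lemma RegEpi.isRegularEpi {A B : E} {f : A ⟶ B} (hf : RegEpi f) : IsRegularEpi f := ⟨hf⟩

lemma RegEpi.epi {A B : E} {f : A ⟶ B} (hf : RegEpi f) : Epi f :=
  RegularEpi.epi f hf.some

lemma RegEpi.strongEpi {A B : E} {f : A ⟶ B} (hf : RegEpi f) : StrongEpi f :=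
  have := hf.isRegularEpi
  inferInstance

variable [HasFiniteLimits E]

lemma IsExact.regEpi_of_strongEpi (hE : IsExact E) {A B : E} (f : A ⟶ B) [StrongEpi f] :
    RegEpi f := by
  obtain ⟨I, e, m, he, hm, rfl⟩ := hE.factor f
  have := strongEpi_of_strongEpi e m
  have := isIso_of_mono_of_strongEpi m
  exact ⟨RegularEpi.ofArrowIso (Arrow.isoMk (Iso.refl A) (asIso m)) he.some⟩

lemma IsExact.regEpi_comp (hE : IsExact E) {A B C : E} {f : A ⟶ B} {g : B ⟶ C}
    (hf : RegEpi f) (hg : RegEpi g) : RegEpi (f ≫ g) :=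
  have := hf.strongEpi
  have := hg.strongEpi
  hE.regEpi_of_strongEpi _

lemma IsExact.regEpi_of_regEpi_comp (hE : IsExact E) {A B C : E} {f : A ⟶ B} {g : B ⟶ C}
    (h : RegEpi (f ≫ g)) : RegEpi g :=
  have := h.strongEpi
  have := strongEpi_of_strongEpi f g
  hE.regEpi_of_strongEpi g

lemma regProjective_of_forall_regEpi_split (hE : IsExact E) {Z : E}
    (h : ∀ ⦃T : E⦄ (r : T ⟶ Z), RegEpi r → ∃ s : Z ⟶ T, s ≫ r = 𝟙 Z) : RegProjective Z := by
  intro A B e he f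
  obtain ⟨s, hs⟩ := h (pullback.snd e f) (hE.stable e f he)
  refine ⟨s ≫ pullback.fst e f, ?_⟩
  rw [Category.assoc, pullback.condition, reassoc_of% hs]

lemma IsWeakProduct.regEpi_prodLift (hE : IsExact E) {P : Set E} (hP : IsProjectiveCover P)
    {W X V : E} {p : V ⟶ W} {q : V ⟶ X} (hwp : IsWeakProduct P p q) :
    RegEpi (prod.lift p q) := by
  obtain ⟨Z, hZ, z, hz⟩ := hP.2 (W ⨯ X)
  obtain ⟨h, hp, hq⟩ := hwp.lift hZ (z ≫ prod.fst) (z ≫ prod.snd)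
  have hfac : h ≫ prod.lift p q = z := by
    apply prod.hom_ext <;> simp [hp, hq, prod.lift_fst, prod.lift_snd]
  exact hE.regEpi_of_regEpi_comp (hfac ▸ hz)

/-- Descent along `prod.lift p q` needs `e` to coequalise every pair identified by it, not only
pairs out of `P`; covering the source of the pair by an object of `P` reduces to the latter. -/
lemma DeterminedByProjections.exists_prodLift_comp_eq (hE : IsExact E) {P : Set E}
    (hP : IsProjectiveCover P) {W X V Y : E} {p : V ⟶ W} {q : V ⟶ X} {e : V ⟶ Y}
    (hwp : IsWeakProduct P p q) (hdet : DeterminedByProjections P p q e) :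
    ∃ ψ : W ⨯ X ⟶ Y, prod.lift p q ≫ ψ = e := by
  have := (hwp.regEpi_prodLift hE hP).isRegularEpi
  refine ⟨EffectiveEpi.desc _ e fun {T} g₁ g₂ hg ↦ ?_, EffectiveEpi.fac _ _ _⟩
  obtain ⟨Z, hZ, d, hd⟩ := hP.2 T
  have := hd.epi
  rw [← cancel_epi d]
  simpa using hdet hZ (d ≫ g₁) (d ≫ g₂)
    (by simpa [prod.lift_fst] using d ≫= hg =≫ prod.fst)
    (by simpa [prod.lift_snd] using d ≫= hg =≫ prod.snd)

lemma WSPCone.prodLift_comp_prodMap {P : Set E} {J X Y W V : E} {k : Y ⟶ J ⨯ X}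
    {w : W ⟶ J} {p : V ⟶ W} {q : V ⟶ X} {e : V ⟶ Y}
    (hW : WSPCone P (k ≫ prod.fst) (k ≫ prod.snd) W V w p q e) :
    prod.lift p q ≫ prod.map w (𝟙 X) = e ≫ k := by
  apply prod.hom_ext
  · simpa [prod.lift_fst] using hW.comm₁
  · simpa [prod.lift_snd] using hW.comm₂

/-- `w_X(⊤) = ⊤`, because `𝟙 J ⨯ X` lies below the top subobject of `J ⨯ X`. -/
lemma IsWeakSimpleProduct.regEpi_of_wAdj (hE : IsExact E) {P : Set E} {J X : E}
    (hadj : WAdj P J X) {Y : E} (hY : Y ∈ P) {c : Y ⟶ J ⨯ X} (hc : RegEpi c)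
    {W V : E} {w : W ⟶ J} {p : V ⟶ W} {q : V ⟶ X} {e : V ⟶ Y}
    (hW : IsWeakSimpleProduct P (c ≫ prod.fst) (c ≫ prod.snd) W V w p q e) : RegEpi w := by
  obtain ⟨I, ew, m, hew, hm, hw⟩ := hE.factor w
  have hadjTop := hadj (𝟙 (J ⨯ X)) inferInstance hY (c ≫ 𝟙 _) (by simpa using hc) w p q e
    (by simpa using hW) ew m hew hm hw (𝟙 J) inferInstance
  obtain ⟨s, hs⟩ := hadjTop.mp ⟨prod.map (𝟙 J) (𝟙 X), by simp⟩
  have : IsSplitEpi m := ⟨⟨s, hs⟩⟩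
  exact hw ▸ hE.regEpi_comp hew ⟨RegularEpi.ofSplitEpi m⟩

lemma exists_section_of_wAdj (hE : IsExact E) {P : Set E} (hP : IsProjectiveCover P)
    (hwsp : HasWeakSimpleProducts P) {J X : E} (hJ : J ∈ P) (hX : X ∈ P)
    (hadj : WAdj P J X) {T : E} {r : T ⟶ J ⨯ X} (hr : RegEpi r) :
    ∃ s : J ⨯ X ⟶ T, s ≫ r = 𝟙 (J ⨯ X) := by
  obtain ⟨Y, hY, c, hc⟩ := hP.2 T
  obtain ⟨W, V, w, p, q, e, hW⟩ := hwsp hJ hY hX ((c ≫ r) ≫ prod.fst) ((c ≫ r) ≫ prod.snd)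
  obtain ⟨σ, hσ⟩ := hP.1 J hJ w (hW.regEpi_of_wAdj hE hadj hY (hE.regEpi_comp hc hr)) (𝟙 J)
  obtain ⟨ψ, hψ⟩ := hW.cone.det.exists_prodLift_comp_eq hE hP hW.cone.wp
  have := (hW.cone.wp.regEpi_prodLift hE hP).epi
  have hψr : ψ ≫ c ≫ r = prod.map w (𝟙 X) := by
    rw [← cancel_epi (prod.lift p q), reassoc_of% hψ, hW.cone.prodLift_comp_prodMap]
  refine ⟨prod.map σ (𝟙 X) ≫ ψ ≫ c, ?_⟩
  rw [Category.assoc, Category.assoc, hψr, prod.map_map, hσ, Category.comp_id, prod.map_id_id]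

end

/-- If `P` has weak simple products, `J, X ∈ P`, and for every subobject
`a : A ↪ J ⨯ X` the subobject `w_X(a)` of `J` satisfies the adjunction property, then
`J ⨯ X` is projective. -/
theorem stmt3 {E : Type u} [Category.{v} E] [HasFiniteLimits E]
    (hE : IsExact E) (P : Set E) (hP : IsProjectiveCover P)
    (hwsp : HasWeakSimpleProducts P) (J X : E) (hJ : J ∈ P) (hX : X ∈ P)
    (hadj : WAdj P J X) :
    RegProjective (J ⨯ X) :=
  regProjective_of_forall_regEpi_split hE fun _ _ hr ↦
    exists_section_of_wAdj hE hP hwsp hJ hX hadj hr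

end ExComp
end
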